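/- Under the same setup, with W† = W(WᵀW)^{-1} and Ŵ† = Ŵ(ŴᵀŴ)^{-1}, and W = Ŵ A D^{-1/2} Aᵀ so that W† = Ŵ† A D^{1/2} Aᵀ, one has ‖W† − Ŵ†‖₂ ≤ ‖Ŵ†‖₂ ‖I − D‖₂ ≤ (2√σ_1(M₂)/σ_K(M₂)) ‖M₂ − M̂₂‖₂ (assuming ‖M₂ − M̂₂‖₂ ≤ σ_K(M₂)/2). -/

import Mathlib

open Matrix Finset

noncomputable def opNorm {m n : Type*} [Fintype m] [Fintype n] [DecidableEq n]
    (A : Matrix m n ℝ) : ℝ :=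
  ‖(Matrix.toEuclideanLin A).toContinuousLinearMap‖

/-! Both bounds come from `W† - Ŵ† = Ŵ† A (D^{1/2} - I) Aᵀ`; the first then follows from
`|√d - 1| ≤ |1 - d|`. For the second, write `D^{1/2} - I = (D - I) (D^{1/2} + I)⁻¹` and
`A (D - I) Aᵀ = Ŵᵀ (M₂ - M̂₂) Ŵ`, so that `W† - Ŵ† = (Ŵ† Ŵᵀ) (M₂ - M̂₂) Ŵ C` with `‖C‖ ≤ 1`.
Here `Ŵ† Ŵᵀ` is an orthogonal projection and `‖Ŵ‖ ≤ σ_K(M̂₂)^{-1/2}`, which by Weyl's inequality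
is at most `(σ_K(M₂) / 2)^{-1/2} ≤ 2 √σ₁(M₂) / σ_K(M₂)`. -/

open scoped Matrix.Norms.L2Operator

namespace Real

theorem sqrt_sub_one_eq_mul_inv {d : ℝ} (hd : 0 ≤ d) :
    √d - 1 = (d - 1) * (√d + 1)⁻¹ := by
  have h : √d + 1 ≠ 0 := by positivity
  field_simp
  linear_combination Real.mul_self_sqrt hd

theorem abs_sqrt_sub_one_le {d : ℝ} (hd : 0 ≤ d) : |√d - 1| ≤ |1 - d| := by
  have hpos : 0 < (√d + 1)⁻¹ := by positivity
  have hle : (√d + 1)⁻¹ ≤ 1 := inv_le_one_of_one_le₀ (le_add_of_nonneg_left (sqrt_nonneg d))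
  rw [sqrt_sub_one_eq_mul_inv hd, abs_mul, abs_sub_comm, abs_of_pos hpos]
  exact mul_le_of_le_one_right (abs_nonneg _) hle

theorem inv_sqrt_le_two_mul_sqrt_div {s s₁ t : ℝ} (hs : 0 < s) (hs₁ : s ≤ s₁)
    (ht : s / 2 ≤ t) :
    (√t)⁻¹ ≤ 2 * √s₁ / s := by
  have ht' : t⁻¹ ≤ 2 / s := by simpa using inv_anti₀ (half_pos hs) ht
  refine le_of_pow_le_pow_left₀ two_ne_zero (div_nonneg (by positivity) hs.le) ?_
  rw [inv_pow, sq_sqrt (by linarith), div_pow, mul_pow, sq_sqrt (by linarith),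
    le_div_iff₀ (pow_pos hs 2)]
  calc t⁻¹ * s ^ 2 ≤ 2 / s * s ^ 2 := by gcongr
    _ = 2 * s := by field_simp
    _ ≤ 2 ^ 2 * s₁ := by linarith

end Real

theorem opNorm_eq_l2_opNorm {m n : Type*} [Fintype m] [Fintype n] [DecidableEq n]
    (A : Matrix m n ℝ) : opNorm A = ‖A‖ := rfl

namespace Matrix

variable {m n : Type*} [Fintype m] [Fintype n] [DecidableEq n]

theorem l2_opNorm_transpose [DecidableEq m] (A : Matrix m n ℝ) : ‖Aᵀ‖ = ‖A‖ := by
  simpa using l2_opNorm_conjTranspose A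

theorem l2_opNorm_diagonal_le {c : n → ℝ} {b : ℝ} (hb : 0 ≤ b)
    (h : ∀ i, |c i| ≤ b) : ‖diagonal c‖ ≤ b := by
  rw [l2_opNorm_diagonal]
  exact (pi_norm_le_iff_of_nonneg hb).2 h

theorem l2_opNorm_le_one_of_transpose_mul_self {U : Matrix m n ℝ}
    (hU : Uᵀ * U = 1) : ‖U‖ ≤ 1 := by
  have h := l2_opNorm_conjTranspose_mul_self U
  have h1 : ‖(1 : Matrix n n ℝ)‖ ≤ 1 := by
    rw [← diagonal_one]; exact l2_opNorm_diagonal_le zero_le_one (by simp)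
  rw [conjTranspose_eq_transpose_of_trivial, hU] at h
  nlinarith [norm_nonneg U]

theorem l2_opNorm_mul_diagonal_le {U : Matrix m n ℝ} (hU : Uᵀ * U = 1)
    {c : n → ℝ} {b : ℝ} (hb : 0 ≤ b) (h : ∀ i, |c i| ≤ b) : ‖U * diagonal c‖ ≤ b :=
  calc ‖U * diagonal c‖ ≤ ‖U‖ * ‖diagonal c‖ := l2_opNorm_mul _ _
    _ ≤ 1 * b := by
        gcongr
        exacts [l2_opNorm_le_one_of_transpose_mul_self hU, l2_opNorm_diagonal_le hb h]
    _ = b := one_mul b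

theorem l2_opNorm_conj_le [DecidableEq m] {A : Matrix m n ℝ} (hA : Aᵀ * A = 1)
    (B : Matrix n n ℝ) : ‖A * B * Aᵀ‖ ≤ ‖B‖ := by
  have hA1 := l2_opNorm_le_one_of_transpose_mul_self hA
  calc ‖A * B * Aᵀ‖ ≤ ‖A‖ * ‖B‖ * ‖A‖ := by
        grw [l2_opNorm_mul, l2_opNorm_mul, l2_opNorm_transpose A]
    _ ≤ 1 * ‖B‖ * 1 := by gcongr
    _ = ‖B‖ := by ring

/-- The orthogonal projection onto the column space of `W` (and `0`, through the junk value of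
`⁻¹`, when `Wᵀ * W` is singular). -/
theorem l2_opNorm_mul_inv_mul_transpose_le_one [DecidableEq m]
    (W : Matrix m n ℝ) : ‖W * (Wᵀ * W)⁻¹ * Wᵀ‖ ≤ 1 := by
  set P := W * (Wᵀ * W)⁻¹ * Wᵀ
  by_cases hW : IsUnit (Wᵀ * W).det
  · have hP : Pᴴ * P = P := by
      have hsymm : Pᴴ = P := by
        simp [P, conjTranspose_eq_transpose_of_trivial, transpose_nonsing_inv, Matrix.mul_assoc]
      rw [hsymm]
      calc P * P = W * ((Wᵀ * W)⁻¹ * (Wᵀ * W)) * (Wᵀ * W)⁻¹ * Wᵀ := by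
            simp only [P, Matrix.mul_assoc]
        _ = P := by rw [nonsing_inv_mul _ hW, Matrix.mul_one]
    have h := l2_opNorm_conjTranspose_mul_self P
    rw [hP] at h
    nlinarith [norm_nonneg P]
  · simp [P, nonsing_inv_apply_not_isUnit _ hW]

theorem dotProduct_mulVec_le_l2_opNorm (B : Matrix n n ℝ) (x : n → ℝ) :
    x ⬝ᵥ (B *ᵥ x) ≤ ‖B‖ * (x ⬝ᵥ x) := by
  set v := (EuclideanSpace.equiv n ℝ).symm x
  have hBx := l2_opNorm_mulVec B v
  set w := (EuclideanSpace.equiv n ℝ).symm (B *ᵥ x)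
  have hinner : x ⬝ᵥ (B *ᵥ x) = inner ℝ v w := by
    simp [v, w, PiLp.inner_apply, dotProduct, mul_comm]
  have hnorm : x ⬝ᵥ x = ‖v‖ ^ 2 := by
    rw [EuclideanSpace.norm_sq_eq]; simp [v, dotProduct, sq]
  rw [hinner, hnorm]
  calc _ ≤ ‖v‖ * ‖w‖ := real_inner_le_norm _ _
    _ ≤ ‖v‖ * (‖B‖ * ‖v‖) := by gcongr; exact hBx
    _ = ‖B‖ * ‖v‖ ^ 2 := by ring

section Spectral

variable {n : Type*} [Fintype n]

theorem dotProduct_conj_diagonal_mulVec [DecidableEq n] (Q : Matrix n n ℝ) (σ x : n → ℝ) :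
    x ⬝ᵥ ((Q * diagonal σ * Qᵀ) *ᵥ x) = ∑ i, σ i * (Qᵀ *ᵥ x) i ^ 2 := by
  rw [← mulVec_mulVec, ← mulVec_mulVec, dotProduct_mulVec, ← mulVec_transpose]
  simp only [dotProduct, mulVec_diagonal]
  exact Finset.sum_congr rfl fun i _ => by ring

theorem dotProduct_transpose_mulVec_self [DecidableEq n] {Q : Matrix n n ℝ} (hQ : Q * Qᵀ = 1)
    (x : n → ℝ) : (Qᵀ *ᵥ x) ⬝ᵥ (Qᵀ *ᵥ x) = x ⬝ᵥ x := by
  rw [dotProduct_mulVec, vecMul_transpose, mulVec_mulVec, hQ, one_mulVec]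

variable [LinearOrder n] {Q : Matrix n n ℝ} {σ : n → ℝ}

theorem le_dotProduct_conj_diagonal_mulVec (hσ : Antitone σ) (hQ : Q * Qᵀ = 1) {j : n}
    {x : n → ℝ} (hx : ∀ i, j < i → (Qᵀ *ᵥ x) i = 0) :
    σ j * (x ⬝ᵥ x) ≤ x ⬝ᵥ ((Q * diagonal σ * Qᵀ) *ᵥ x) := by
  rw [dotProduct_conj_diagonal_mulVec, ← dotProduct_transpose_mulVec_self hQ, dotProduct,
    Finset.mul_sum]
  refine Finset.sum_le_sum fun i _ => ?_
  rcases le_or_gt i j with hij | hji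
  · rw [← sq]; exact mul_le_mul_of_nonneg_right (hσ hij) (sq_nonneg _)
  · simp [hx i hji]

theorem dotProduct_conj_diagonal_mulVec_le (hσ : Antitone σ) (hQ : Q * Qᵀ = 1) {j : n}
    {x : n → ℝ} (hx : ∀ i, i < j → (Qᵀ *ᵥ x) i = 0) :
    x ⬝ᵥ ((Q * diagonal σ * Qᵀ) *ᵥ x) ≤ σ j * (x ⬝ᵥ x) := by
  rw [dotProduct_conj_diagonal_mulVec, ← dotProduct_transpose_mulVec_self hQ, dotProduct,
    Finset.mul_sum]
  refine Finset.sum_le_sum fun i _ => ?_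
  rcases le_or_gt j i with hji | hij
  · rw [← sq]; exact mul_le_mul_of_nonneg_right (hσ hji) (sq_nonneg _)
  · simp [hx i hij]

theorem exists_ne_zero_forall_lt_mulVec_eq_zero (P : Matrix n n ℝ) (j : n) :
    ∃ y : n → ℝ, y ≠ 0 ∧ (∀ i, j < i → y i = 0) ∧ ∀ i, i < j → (P *ᵥ y) i = 0 := by
  let extend : ({i // i ≤ j} → ℝ) →ₗ[ℝ] n → ℝ :=
    LinearMap.pi fun i => if h : i ≤ j then LinearMap.proj ⟨i, h⟩ else 0
  let f := LinearMap.funLeft ℝ ℝ (Subtype.val : {i // i < j} → n) ∘ₗ P.mulVecLin ∘ₗ extend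
  have hcard : Fintype.card {i // i < j} < Fintype.card {i // i ≤ j} :=
    Fintype.card_lt_of_injective_of_notMem (fun i => ⟨i.1, i.2.le⟩)
      (fun a b h => Subtype.ext (congrArg Subtype.val h : _)) (b := ⟨j, le_rfl⟩)
      (by rintro ⟨i, hi⟩; exact i.2.ne (congrArg Subtype.val hi))
  obtain ⟨u, hu, hu0⟩ := Submodule.exists_mem_ne_zero_of_ne_bot
    (LinearMap.ker_ne_bot_of_finrank_lt (f := f) (by simpa using hcard))
  refine ⟨extend u, fun h => hu0 (funext fun i => ?_), fun i hi => ?_, fun i hi => ?_⟩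
  · simpa [extend, i.2] using congrFun h i
  · simp [extend, not_le.2 hi]
  · simpa [f] using congrFun (LinearMap.mem_ker.1 hu) ⟨i, hi⟩

/-- Weyl's inequality. The Courant–Fischer test vector `Q *ᵥ y` lies in the span of the columns
of `Q` up to `j` and is orthogonal to the columns of `Q'` before `j`. -/
theorem sub_l2_opNorm_sub_le_of_conj_diagonal {Q Q' : Matrix n n ℝ} {σ σ' : n → ℝ}
    (hQ : Qᵀ * Q = 1) (hσ : Antitone σ) (hQ' : Q'ᵀ * Q' = 1) (hσ' : Antitone σ') (j : n) :
    σ j - ‖Q * diagonal σ * Qᵀ - Q' * diagonal σ' * Q'ᵀ‖ ≤ σ' j := by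
  obtain ⟨y, hy0, hy, hPy⟩ := exists_ne_zero_forall_lt_mulVec_eq_zero (Q'ᵀ * Q) j
  set x := Q *ᵥ y
  have hQx : Qᵀ *ᵥ x = y := by rw [mulVec_mulVec, hQ, one_mulVec]
  have hQ'x : Q'ᵀ *ᵥ x = (Q'ᵀ * Q) *ᵥ y := mulVec_mulVec _ _ _
  have hx : 0 < x ⬝ᵥ x := by
    rw [← dotProduct_transpose_mulVec_self (mul_eq_one_comm.1 hQ), hQx]
    exact dotProduct_self_star_pos_iff.2 hy0
  have hM := le_dotProduct_conj_diagonal_mulVec hσ (mul_eq_one_comm.1 hQ) (x := x)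
    (hQx ▸ hy)
  have hN := dotProduct_conj_diagonal_mulVec_le hσ' (mul_eq_one_comm.1 hQ') (x := x)
    (hQ'x ▸ hPy)
  have hMN := dotProduct_mulVec_le_l2_opNorm (Q * diagonal σ * Qᵀ - Q' * diagonal σ' * Q'ᵀ) x
  rw [sub_mulVec, dotProduct_sub] at hMN
  nlinarith

end Spectral

section Conjugation

variable {n : Type*} [Fintype n] [DecidableEq n] {A : Matrix n n ℝ}

theorem conj_diagonal_sub_one (hA : Aᵀ * A = 1) (c : n → ℝ) :
    A * diagonal c * Aᵀ - 1 = A * diagonal (fun k => c k - 1) * Aᵀ := by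
  rw [← diagonal_one, ← diagonal_sub, diagonal_one, Matrix.mul_sub, Matrix.sub_mul,
    Matrix.mul_one, mul_eq_one_comm.1 hA]

theorem conj_diagonal_mul (hA : Aᵀ * A = 1) (a b : n → ℝ) :
    A * diagonal (fun k => a k * b k) * Aᵀ = A * diagonal a * Aᵀ * (A * diagonal b * Aᵀ) := by
  rw [← diagonal_mul_diagonal]
  simp only [Matrix.mul_assoc]
  rw [← Matrix.mul_assoc Aᵀ, hA, Matrix.one_mul]

theorem l2_opNorm_conj_diagonal_sqrt_sub_one_le (hA : Aᵀ * A = 1) {d : n → ℝ}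
    (hd : ∀ k, 0 ≤ d k) :
    ‖A * diagonal (fun k => √(d k) - 1) * Aᵀ‖ ≤ ‖1 - diagonal d‖ := by
  refine (l2_opNorm_conj_le hA _).trans (l2_opNorm_diagonal_le (norm_nonneg _) fun k => ?_)
  rw [← diagonal_one, diagonal_sub, l2_opNorm_diagonal]
  exact (Real.abs_sqrt_sub_one_le (hd k)).trans (norm_le_pi_norm (1 - d) k)

/-- The factorization `√D - I = (D - I)(√D + I)⁻¹`, conjugated by `A`. -/
theorem exists_conj_diagonal_sqrt_sub_one_eq_mul (hA : Aᵀ * A = 1) {d : n → ℝ}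
    (hd : ∀ k, 0 ≤ d k) : ∃ C : Matrix n n ℝ, ‖C‖ ≤ 1 ∧
      A * diagonal (fun k => √(d k) - 1) * Aᵀ = (A * diagonal d * Aᵀ - 1) * C := by
  refine ⟨A * diagonal (fun k => (√(d k) + 1)⁻¹) * Aᵀ, ?_, ?_⟩
  · refine (l2_opNorm_conj_le hA _).trans (l2_opNorm_diagonal_le zero_le_one fun k => ?_)
    rw [abs_of_nonneg (by positivity)]
    exact inv_le_one_of_one_le₀ (le_add_of_nonneg_left (Real.sqrt_nonneg _))
  · rw [conj_diagonal_sub_one hA, ← conj_diagonal_mul hA]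
    simp only [Real.sqrt_sub_one_eq_mul_inv (hd _)]

theorem submatrix_id_transpose_mul_self {κ : Type*} [DecidableEq κ] {Q : Matrix n n ℝ}
    (hQ : Qᵀ * Q = 1) {f : κ → n} (hf : Function.Injective f) :
    (Q.submatrix id f)ᵀ * Q.submatrix id f = 1 := by
  rw [transpose_submatrix, ← submatrix_mul _ _ _ _ _ Function.bijective_id, hQ,
    submatrix_one _ hf]

theorem l2_opNorm_submatrix_mul_diagonal_inv_sqrt_le {κ : Type*} [Fintype κ] [DecidableEq κ]
    {Q : Matrix n n ℝ} (hQ : Qᵀ * Q = 1) {f : κ → n} (hf : Function.Injective f) {σ : n → ℝ}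
    {s : ℝ} (hs : 0 < s) (hσ : ∀ k, s ≤ σ (f k)) :
    ‖Q.submatrix id f * diagonal (fun k => (√(σ (f k)))⁻¹)‖ ≤ (√s)⁻¹ := by
  refine l2_opNorm_mul_diagonal_le (submatrix_id_transpose_mul_self hQ hf) (by positivity)
    fun k => ?_
  rw [abs_of_nonneg (by positivity)]
  exact inv_anti₀ (Real.sqrt_pos.2 hs) (Real.sqrt_le_sqrt (hσ k))

end Conjugation

end Matrix

theorem stmt13 (D K : ℕ) (hK : 0 < K) (hKD : K ≤ D)
    (M₂ N₂ : Matrix (Fin D) (Fin D) ℝ)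
    (σ : Fin D → ℝ) (Q : Matrix (Fin D) (Fin D) ℝ)
    (hQ : Qᵀ * Q = 1) (hsort : Antitone σ)
    (hdec : M₂ = Q * Matrix.diagonal σ * Qᵀ)
    (σ' : Fin D → ℝ) (Q' : Matrix (Fin D) (Fin D) ℝ)
    (hQ' : Q'ᵀ * Q' = 1) (hsort' : Antitone σ')
    (hdec' : N₂ = Q' * Matrix.diagonal σ' * Q'ᵀ)
    (hσK : 0 < σ ⟨K - 1, by omega⟩)
    (hε : opNorm (M₂ - N₂) ≤ σ ⟨K - 1, by omega⟩ / 2)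
    (U' : Matrix (Fin D) (Fin K) ℝ)
    (hU' : U' = Q'.submatrix id (Fin.castLE hKD))
    (W' : Matrix (Fin D) (Fin K) ℝ)
    (hW' : W' = U' * Matrix.diagonal (fun k => (Real.sqrt (σ' (Fin.castLE hKD k)))⁻¹))
    (hwhiten : W'ᵀ * N₂ * W' = 1)
    (A : Matrix (Fin K) (Fin K) ℝ) (hA : Aᵀ * A = 1)
    (d : Fin K → ℝ) (hd : ∀ k, 0 < d k)
    (hAD : W'ᵀ * M₂ * W' = A * Matrix.diagonal d * Aᵀ)
    (Wdag W'dag : Matrix (Fin D) (Fin K) ℝ)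
    (hW'dag : W'dag = W' * (W'ᵀ * W')⁻¹)
    (hrel : Wdag = W'dag * A * Matrix.diagonal (fun k => Real.sqrt (d k)) * Aᵀ) :
    opNorm (Wdag - W'dag)
        ≤ opNorm W'dag * opNorm ((1 : Matrix (Fin K) (Fin K) ℝ) - Matrix.diagonal d) ∧
    opNorm (Wdag - W'dag)
        ≤ (2 * Real.sqrt (σ ⟨0, by omega⟩) / σ ⟨K - 1, by omega⟩) * opNorm (M₂ - N₂) := by
  simp only [opNorm_eq_l2_opNorm] at hε ⊢
  have hd₀ : ∀ k, 0 ≤ d k := fun k => (hd k).le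
  have hdiff : Wdag - W'dag = W'dag * (A * diagonal (fun k => √(d k) - 1) * Aᵀ) := by
    rw [hrel, ← conj_diagonal_sub_one hA, Matrix.mul_sub, Matrix.mul_one]
    simp only [Matrix.mul_assoc]
  refine ⟨?_, ?_⟩
  · rw [hdiff]
    grw [l2_opNorm_mul, l2_opNorm_conj_diagonal_sqrt_sub_one_le hA hd₀]
  obtain ⟨C, hC, hAC⟩ := exists_conj_diagonal_sqrt_sub_one_eq_mul hA hd₀
  have hdiff' : Wdag - W'dag = W'dag * W'ᵀ * (M₂ - N₂) * W' * C := by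
    rw [hdiff, hAC, ← hAD, ← hwhiten]
    simp only [Matrix.mul_sub, Matrix.sub_mul, Matrix.mul_assoc]
  set j : Fin D := ⟨K - 1, by omega⟩
  have hweyl : σ j / 2 ≤ σ' j := by
    have := sub_l2_opNorm_sub_le_of_conj_diagonal hQ hsort hQ' hsort' j
    rw [← hdec, ← hdec'] at this
    linarith
  have hW'norm : ‖W'‖ ≤ (√(σ' j))⁻¹ := by
    rw [hW', hU']
    exact l2_opNorm_submatrix_mul_diagonal_inv_sqrt_le hQ' (Fin.castLE_injective hKD)
      (by linarith) fun k => hsort' (Fin.le_def.2 (by simp [j]; omega))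
  have hP : ‖W'dag * W'ᵀ‖ ≤ 1 := hW'dag ▸ l2_opNorm_mul_inv_mul_transpose_le_one W'
  calc ‖Wdag - W'dag‖ ≤ ‖W'dag * W'ᵀ‖ * ‖M₂ - N₂‖ * ‖W'‖ * ‖C‖ := by
        rw [hdiff']
        grw [l2_opNorm_mul, l2_opNorm_mul, l2_opNorm_mul]
    _ ≤ 1 * ‖M₂ - N₂‖ * (√(σ' j))⁻¹ * 1 := by gcongr
    _ ≤ (2 * √(σ ⟨0, by omega⟩) / σ j) * ‖M₂ - N₂‖ := by
        rw [mul_one, one_mul, mul_comm]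
        gcongr
        exact Real.inv_sqrt_le_two_mul_sqrt_div hσK (hsort (Fin.le_def.2 (Nat.zero_le _))) hweyl
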